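/- Suppose the theory T eliminates finitary hyperimaginaries. Then for any finitary hyperimaginary e, the theory T(e) obtained by naming e eliminates finitary hyperimaginaries. Concretely: if e is in dcl^heq(a) for a finite tuple a, and h is a hyperimaginary in dcl^heq(e b) for a finite tuple b, then h is interdefinable over e with a sequence of imaginaries. -/
import Mathlib


noncomputable section

/-!  An abstract interface for the monster model `C` of a complete first-order
theory: its imaginary elements, its automorphism group, and the class of
relations on countable tuples of imaginaries which are type-definable over a
set of parameters.  Hyperimaginaries are realized as classes of tuples modulo
`∅`-type-definable equivalence relations. -/

structure Monster : Type 1 where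
  /-- the imaginary elements of the monster model `C^eq` -/
  Imag : Type
  /-- a distinguished imaginary element (used for padding finite tuples) -/
  star : Imag
  /-- the automorphism group of the monster model -/
  Aut : Type
  one : Aut
  mul : Aut → Aut → Aut
  inv : Aut → Aut
  act : Aut → Imag → Imag
  act_one : ∀ x, act one x = x
  act_mul : ∀ g h x, act (mul g h) x = act g (act h x)
  act_inv : ∀ g x, act (inv g) (act g x) = x
  /-- `TypeDefOver A R` : the relation `R` on tuples of imaginaries is
  type-definable over the set `A` of (raw) hyperimaginaries, a raw
  hyperimaginary being a pair (relation, representative tuple). -/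
  TypeDefOver : Set ((((ℕ → Imag) → (ℕ → Imag) → Prop)) × (ℕ → Imag)) →
    (((ℕ → Imag) → (ℕ → Imag) → Prop)) → Prop
  /-- type-definable relations are invariant under automorphisms fixing the parameters -/
  typeDefOver_invariant : ∀ A R, TypeDefOver A R →
    ∀ g, (∀ p ∈ A, p.1 (fun i => act g (p.2 i)) p.2) →
    ∀ a b, R a b → R (fun i => act g (a i)) (fun i => act g (b i))
  /-- equality of the first coordinates is type-definable over `∅` -/
  typeDef_eq0 : TypeDefOver ∅ (fun a b => a 0 = b 0)
  /-- equality of the first `n` coordinates is type-definable over `∅` -/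
  typeDef_eqLt : ∀ n : ℕ, TypeDefOver ∅ (fun a b => ∀ i < n, a i = b i)
  /-- equality of tuples is type-definable over `∅` -/
  typeDef_eqAll : TypeDefOver ∅ (fun a b => ∀ i, a i = b i)
  /-- `Def A R` : the relation `R` is (first-order) definable over `A` -/
  Def : Set ((((ℕ → Imag) → (ℕ → Imag) → Prop)) × (ℕ → Imag)) →
    (((ℕ → Imag) → (ℕ → Imag) → Prop)) → Prop
  /-- the threshold for "boundedly many": cardinals `< kappa` are small
  compared to the degree of saturation of the monster -/
  kappa : Cardinal.{0}
  aleph0_lt_kappa : Cardinal.aleph0 < kappa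

namespace Monster

variable (M : Monster)

/-- (countable) tuples of imaginaries -/
abbrev Tup := ℕ → M.Imag

/-- relations on tuples -/
abbrev Rel := M.Tup → M.Tup → Prop

/-- raw hyperimaginaries: pairs (relation, representative) -/
abbrev Raw := M.Rel × M.Tup

/-- the action of automorphisms on tuples -/
def actT (g : M.Aut) (a : M.Tup) : M.Tup := fun i => M.act g (a i)

/-- type-definable over `∅` -/
def TypeDef (R : M.Rel) : Prop := M.TypeDefOver ∅ R

/-- A hyperimaginary: the class of a tuple of imaginaries modulo an
`∅`-type-definable equivalence relation. -/
structure Hyp where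
  E : M.Rel
  typeDef : M.TypeDef E
  equiv : Equivalence E
  rep : M.Tup

variable {M}

def Hyp.raw (h : M.Hyp) : M.Raw := (h.E, h.rep)

/-- two hyperimaginaries are equal as classes -/
def heq (h h' : M.Hyp) : Prop := h.E = h'.E ∧ h.E h.rep h'.rep

variable (M)

def rawSet (S : Set M.Hyp) : Set M.Raw := Hyp.raw '' S

/-- an automorphism fixes a hyperimaginary if it fixes its class -/
def fixes (g : M.Aut) (h : M.Hyp) : Prop := h.E (M.actT g h.rep) h.rep

def fixesSet (g : M.Aut) (S : Set M.Hyp) : Prop := ∀ h ∈ S, M.fixes g h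

/-- hyperimaginary definable closure `dcl^heq` -/
def dcl (S : Set M.Hyp) : Set M.Hyp :=
  {h | ∀ g, M.fixesSet g S → M.fixes g h}

/-- the action of automorphisms on hyperimaginaries -/
def actH (g : M.Aut) (h : M.Hyp) : M.Hyp := ⟨h.E, h.typeDef, h.equiv, M.actT g h.rep⟩

def setoidOf (h : M.Hyp) : Setoid M.Tup := ⟨h.E, h.equiv⟩

/-- the number of conjugates of `h` over `S` (conjugate representatives are
counted modulo the defining equivalence relation of `h`) -/
def numConj (S : Set M.Hyp) (h : M.Hyp) : Cardinal :=
  Cardinal.mk ((Quotient.mk (M.setoidOf h)) ''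
    {a | ∃ g, M.fixesSet g S ∧ a = M.actT g h.rep} : Set _)

/-- bounded closure: hyperimaginaries with boundedly many conjugates over `S` -/
def bdd (S : Set M.Hyp) : Set M.Hyp := {h | M.numConj S h < M.kappa}

/-- the set of `S`-conjugates of `h` -/
def conjugates (S : Set M.Hyp) (h : M.Hyp) : Set M.Hyp :=
  {x | ∃ g, M.fixesSet g S ∧ x = M.actH g h}

def interdef (h h' : M.Hyp) : Prop := h ∈ M.dcl {h'} ∧ h' ∈ M.dcl {h}

/-- `h` is interdefinable with the set `S` of hyperimaginaries -/
def interdefSet (h : M.Hyp) (S : Set M.Hyp) : Prop :=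
  h ∈ M.dcl S ∧ S ⊆ M.dcl {h}

/-- the hyperimaginary corresponding to a single imaginary element -/
def ofImag (e : M.Imag) : M.Hyp :=
  ⟨fun a b => a 0 = b 0, M.typeDef_eq0,
    ⟨fun _ => rfl, fun hab => hab.symm, fun hab hbc => hab.trans hbc⟩, fun _ => e⟩

/-- the hyperimaginary corresponding to the finite tuple of imaginaries given
by the first `n` coordinates of `a` -/
def ofFin (n : ℕ) (a : M.Tup) : M.Hyp :=
  ⟨fun x y => ∀ i < n, x i = y i, M.typeDef_eqLt n,
    ⟨fun _ _ _ => rfl, fun hab i hi => (hab i hi).symm,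
      fun hab hbc i hi => (hab i hi).trans (hbc i hi)⟩, a⟩

/-- the hyperimaginary corresponding to the (countable) tuple `a` -/
def ofTup (a : M.Tup) : M.Hyp :=
  ⟨fun x y => ∀ i, x i = y i, M.typeDef_eqAll,
    ⟨fun _ _ => rfl, fun hab i => (hab i).symm,
      fun hab hbc i => (hab i).trans (hbc i)⟩, a⟩

/-- a set of imaginaries, viewed as a set of hyperimaginaries -/
def img (E : Set M.Imag) : Set M.Hyp := M.ofImag '' E

/-- a hyperimaginary is eliminable if it is interdefinable with a sequence of
imaginary elements -/
def eliminable (h : M.Hyp) : Prop := ∃ E : Set M.Imag, M.interdefSet h (M.img E)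

/-- `h` is interdefinable over `S` with a sequence of imaginaries -/
def eliminableOver (S : Set M.Hyp) (h : M.Hyp) : Prop :=
  ∃ E : Set M.Imag, h ∈ M.dcl (S ∪ M.img E) ∧ M.img E ⊆ M.dcl (S ∪ {h})

/-- a finitary hyperimaginary: one in `dcl^heq` of a finite tuple of imaginaries -/
def finitary (h : M.Hyp) : Prop := ∃ (n : ℕ) (a : M.Tup), h ∈ M.dcl {M.ofFin n a}

/-- a quasi-finitary hyperimaginary: one in `bdd` of a finite tuple of imaginaries -/
def quasiFinitary (h : M.Hyp) : Prop := ∃ (n : ℕ) (a : M.Tup), h ∈ M.bdd {M.ofFin n a}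

/-- `T` eliminates finitary hyperimaginaries -/
def ElimFinitary : Prop := ∀ h : M.Hyp, M.finitary h → M.eliminable h

/-- a relation on tuples invariant under all automorphisms fixing `A` -/
def invariantOver (A : Set M.Hyp) (R : M.Rel) : Prop :=
  ∀ g, M.fixesSet g A → ∀ a b, R a b → R (M.actT g a) (M.actT g b)

/-- `R` is the relation of lying in the same class of the classifying map `f` -/
def classifiedBy (R : M.Rel) {I : Type} (f : M.Tup → I) : Prop :=
  ∀ a b, R a b ↔ f a = f b

/-- equality of Lascar strong types over `A`: same class modulo every
`A`-invariant bounded equivalence relation -/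
def LstpEq (A : Set M.Hyp) (a b : M.Tup) : Prop :=
  ∀ R : M.Rel, M.invariantOver A R →
    (∃ (I : Type) (f : M.Tup → I), Cardinal.mk I < M.kappa ∧ M.classifiedBy R f) →
    R a b

/-- equality of strong types over `A`: same class modulo every `A`-definable
finite equivalence relation -/
def StpEq (A : Set M.Hyp) (a b : M.Tup) : Prop :=
  ∀ R : M.Rel, M.Def (M.rawSet A) R →
    (∃ (n : ℕ) (f : M.Tup → Fin n), M.classifiedBy R f) →
    R a b

/-- `T` is `G`-compact over `A`: Lascar strong type equality over `A` is
type-definable over `A` -/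
def GCompactOver (A : Set M.Hyp) : Prop := M.TypeDefOver (M.rawSet A) (M.LstpEq A)

def GCompact : Prop := ∀ A : Set M.Hyp, M.GCompactOver A

/-- the imaginary algebraic closure of `A`: imaginaries with finitely many
conjugates over `A` -/
def aclI (A : Set M.Hyp) : Set M.Imag :=
  {e | Set.Finite {x | ∃ g, M.fixesSet g A ∧ x = M.act g e}}

/-- two families of tuples have the same type over `∅` (in the strongly
homogeneous monster model: they are conjugate under an automorphism) -/
def sameTypeFam {ι : Type} (x y : ι → M.Tup) : Prop :=
  ∃ g, ∀ i, M.actT g (x i) = y i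

/-- an (order-)indiscernible sequence of tuples -/
def Indisc (c : ℕ → M.Tup) : Prop :=
  ∀ (n : ℕ) (s t : Fin n → ℕ), StrictMono s → StrictMono t →
    M.sameTypeFam (fun i => c (s i)) (fun i => c (t i))

/-- interleaving of two tuples into a single tuple -/
def interleave (a b : M.Tup) : M.Tup :=
  fun n => if n % 2 = 0 then a (n / 2) else b (n / 2)

/-- two finite tuples of imaginaries have the same type over `∅` -/
def sameTypeFin (n : ℕ) (a b : Fin n → M.Imag) : Prop :=
  ∃ g, ∀ i, M.act g (a i) = b i

theorem sameTypeFin_equiv (n : ℕ) : Equivalence (M.sameTypeFin n) where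
  refl a := ⟨M.one, fun i => M.act_one (a i)⟩
  symm := by
    rintro a b ⟨g, hg⟩
    exact ⟨M.inv g, fun i => by rw [← hg i, M.act_inv]⟩
  trans := by
    rintro a b c ⟨g, hg⟩ ⟨g', hg'⟩
    exact ⟨M.mul g' g, fun i => by rw [M.act_mul, hg, hg']⟩

def finSetoid (n : ℕ) : Setoid (Fin n → M.Imag) := ⟨M.sameTypeFin n, M.sameTypeFin_equiv n⟩

/-- the theory is small: countably many complete types over `∅` -/
def Small : Prop := ∀ n : ℕ, Cardinal.mk (Quotient (M.finSetoid n)) ≤ Cardinal.aleph0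

/-- the theory is `ω`-categorical (Ryll-Nardzewski): finitely many complete
`n`-types over `∅` for each `n` -/
def OmegaCat : Prop := ∀ n : ℕ, Finite (Quotient (M.finSetoid n))

/-- a finite tuple of imaginaries, padded to a countable tuple -/
def padTup (n : ℕ) (a : Fin n → M.Imag) : M.Tup :=
  fun i => if h : i < n then a ⟨i, h⟩ else M.star

/-- concatenation of tuples, the first one cut off at length `n` -/
def appendT (n : ℕ) (a b : M.Tup) : M.Tup :=
  fun i => if i < n then a i else b (i - n)

/-- a relation (formula) is stable if it has no infinite order -/
def StableRel (R : M.Rel) : Prop :=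
  ¬ ∃ (a b : ℕ → M.Tup), ∀ i j, R (a i) (b j) ↔ i < j

end Monster

/-- The monster model of a complete *simple* theory: forking independence and
canonical bases are available. -/
structure SimpleMonster extends Monster where
  /-- forking independence: `indep A B C` means `A ⫝_B C` -/
  indep : Set (Monster.Hyp toMonster) → Set (Monster.Hyp toMonster) →
    Set (Monster.Hyp toMonster) → Prop
  indep_symm : ∀ A B C, indep A B C → indep C B A
  /-- `LstpOver A C` : `tp(A/C)` is Lascar strong -/
  LstpOver : Set (Monster.Hyp toMonster) → Set (Monster.Hyp toMonster) → Prop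
  /-- the canonical base `Cb(A/B)` -/
  Cb : Set (Monster.Hyp toMonster) → Set (Monster.Hyp toMonster) →
    Set (Monster.Hyp toMonster)
  Cb_subset_bdd : ∀ A B, Cb A B ⊆ toMonster.bdd B
  Cb_indep : ∀ A B, indep A (Cb A B) B
  Cb_lstp : ∀ A B, LstpOver A (Cb A B)
  /-- `Cb(A/B)` is the smallest definably closed subset of `bdd(B)` over which
  `A` is independent from `B` with `tp(A/·)` Lascar strong -/
  Cb_min : ∀ A B C, C ⊆ toMonster.bdd B →
    toMonster.dcl C ∩ toMonster.bdd B ⊆ C →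
    indep A C B → LstpOver A C → Cb A B ⊆ C
  /-- `forksOver p B` : the parameter-definable set `p` (an instance of a
  formula) forks over `B` -/
  forksOver : (Monster.Tup toMonster → Prop) → Set (Monster.Hyp toMonster) → Prop

namespace SimpleMonster

variable (N : SimpleMonster)

/-- CM-triviality: `bdd(aA) ∩ bdd(B) = bdd(A)` with `A ⊆ B` implies
`Cb(a/A) ⊆ bdd(Cb(a/B))`. -/
def CMTrivial : Prop :=
  ∀ (a A B : Set N.toMonster.Hyp), A ⊆ B →
    N.toMonster.bdd (a ∪ A) ∩ N.toMonster.bdd B = N.toMonster.bdd A →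
    N.Cb a A ⊆ N.toMonster.bdd (N.Cb a B)

/-- supersimplicity: every type does not fork over a finite subset of its domain -/
def Supersimple : Prop :=
  ∀ (a B : Set N.toMonster.Hyp), ∃ B₀ ⊆ B, B₀.Finite ∧ N.indep a B₀ B

end SimpleMonster

/-- The monster model of a simple theory together with the `Σ`-closure
operators `cl_Σ` associated to `∅`-invariant families `Σ` of types
(`cl_Σ(A) = {a : tp(a/A) is Σ-analysable}`). -/
structure ClosureMonster extends SimpleMonster where
  /-- the `∅`-invariant families of types -/
  Fam : Type
  /-- `cl σ A` : the `σ`-closure of `A` -/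
  cl : Fam → Set (Monster.Hyp toMonster) → Set (Monster.Hyp toMonster)
  subset_cl : ∀ σ A, A ⊆ cl σ A
  /-- the family of all non one-based types -/
  nonOneBased : Fam

/-- if `T` eliminates finitary hyperimaginaries, then so does
`T(e)` for any finitary hyperimaginary `e`: if `e ∈ dcl^heq(a)` with `a` a
finite tuple, and `h ∈ dcl^heq(e b)` with `b` a finite tuple, then `h` is
interdefinable over `e` with a sequence of imaginaries. -/
theorem stmt_1 (M : Monster) (helim : M.ElimFinitary)
    (e : M.Hyp) (n : ℕ) (a : M.Tup) (he : e ∈ M.dcl {M.ofFin n a})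
    (h : M.Hyp) (m : ℕ) (b : M.Tup) (hh : h ∈ M.dcl {e, M.ofFin m b}) :
    M.eliminableOver {e} h := by
  -- h is finitary: it lies in dcl of the single finite tuple a⌢b
  have hfin : M.finitary h := by
    refine ⟨n + m, M.appendT n a b, fun g hg => ?_⟩
    have hgc : M.fixes g (M.ofFin (n + m) (M.appendT n a b)) :=
      hg _ rfl
    -- g fixes ofFin n a
    have hga : M.fixes g (M.ofFin n a) := by
      intro i hi
      have := hgc i (lt_of_lt_of_le hi (Nat.le_add_right n m))
      simpa [Monster.ofFin, Monster.appendT, Monster.actT, hi] using this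
    -- g fixes ofFin m b
    have hgb : M.fixes g (M.ofFin m b) := by
      intro i hi
      have hlt : n + i < n + m := Nat.add_lt_add_left hi n
      have := hgc (n + i) hlt
      have hnot : ¬ n + i < n := by omega
      simpa [Monster.ofFin, Monster.appendT, Monster.actT, hnot] using this
    -- hence g fixes e
    have hge : M.fixes g e := he g (by rintro x rfl; exact hga)
    -- hence g fixes h
    exact hh g (by rintro x (rfl | rfl); exacts [hge, hgb])
  obtain ⟨E, hE1, hE2⟩ := helim h hfin
  refine ⟨E, ?_, ?_⟩
  · intro g hg
    exact hE1 g (fun x hx => hg x (Set.mem_union_right _ hx))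
  · intro x hx g hg
    exact hE2 hx g (fun y hy => hg y (by
      rcases hy with rfl : y = h
      exact Set.mem_union_right _ rfl))
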